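/- arXiv:2009.12769 — 6 statements merged into one kernel-verified Lean document; each statement's English description precedes it below -/
import Mathlib

section
/- The recursively defined sequence β₀ = 1, β_{k+1} = β_k + 1/β_k satisfies β_k ≤ 1/(1+√3) + √(2k+1) for all k ≥ 0. -/
open Real

/-!
Induction on `k`. All `β k ≥ 1`, and `x ↦ x + 1 / x` is increasing on `[1, ∞)`, so with
`c = 1 / (1 + √3)` and `a = √(2k + 1)` we get `β (k + 1) ≤ c + a + 1 / (c + a)`. It remains to see
`1 / (c + a) ≤ b - a = 2 / (a + b)` for `b = √(2k + 3)`, i.e. `b - a ≤ 2c`, which holds because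
`a + b ≥ 1 + √3`; the constant `c` is exactly what makes this tight at `k = 0`.
-/

lemma add_one_div_le_add_one_div {x y : ℝ} (hx : 1 ≤ x) (hxy : x ≤ y) :
    x + 1 / x ≤ y + 1 / y := by
  have hx0 : 0 < x := by linarith
  have hy0 : 0 < y := by linarith
  have hdiff : y + 1 / y - (x + 1 / x) = (y - x) * (x * y - 1) / (x * y) := by
    field_simp
    ring
  have hnum : 0 ≤ (y - x) * (x * y - 1) := mul_nonneg (by linarith) (by nlinarith)
  linarith [div_nonneg hnum (mul_pos hx0 hy0).le]

lemma sqrt_add_one_div_le_sqrt_add_two {s : ℝ} (hs : 1 ≤ s) :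
    √s + 1 / (1 / (1 + √3) + √s) ≤ √(s + 2) := by
  set c := 1 / (1 + √3) with hc_def
  set a := √s
  set b := √(s + 2)
  have hc : c * (1 + √3) = 1 := by rw [hc_def]; field_simp
  have ha : 1 ≤ a := one_le_sqrt.mpr hs
  have hb : √3 ≤ b := sqrt_le_sqrt (by linarith)
  have hdiff : (b - a) * (a + b) = 2 := by
    have ha2 : a ^ 2 = s := sq_sqrt (by linarith)
    have hb2 : b ^ 2 = s + 2 := sq_sqrt (by linarith)
    linear_combination hb2 - ha2
  have hab : a ≤ b := sqrt_le_sqrt (by linarith)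
  have hgap : b - a ≤ 2 * c := by
    have hgap_mul : (b - a) * (1 + √3) ≤ 2 := by
      nlinarith [mul_nonneg (sub_nonneg.2 hab) (show 0 ≤ a + b - (1 + √3) by linarith)]
    nlinarith [sqrt_nonneg 3]
  have hca : 0 < c + a := by positivity
  have hprod : 1 ≤ (b - a) * (c + a) := by nlinarith
  have : 1 / (c + a) ≤ b - a := by rw [div_le_iff₀ hca]; linarith
  linarith

lemma add_one_div_le_of_le_add_sqrt {x s : ℝ} (hx : 1 ≤ x) (hs : 1 ≤ s)
    (hxs : x ≤ 1 / (1 + √3) + √s) :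
    x + 1 / x ≤ 1 / (1 + √3) + √(s + 2) :=
  calc x + 1 / x ≤ (1 / (1 + √3) + √s) + 1 / (1 / (1 + √3) + √s) :=
        add_one_div_le_add_one_div hx hxs
    _ ≤ 1 / (1 + √3) + √(s + 2) := by
        linarith [sqrt_add_one_div_le_sqrt_add_two hs]

lemma one_le_of_succ_eq_add_one_div (β : ℕ → ℝ) (h0 : 1 ≤ β 0)
    (hrec : ∀ k, β (k + 1) = β k + 1 / β k) (k : ℕ) : 1 ≤ β k := by
  induction k with
  | zero => exact h0
  | succ n ih =>
    rw [hrec]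
    have : 0 < 1 / β n := by positivity
    linarith

theorem stmt_0 (β : ℕ → ℝ) (h0 : β 0 = 1)
    (hrec : ∀ k, β (k + 1) = β k + 1 / β k) :
    ∀ k : ℕ, β k ≤ 1 / (1 + Real.sqrt 3) + Real.sqrt (2 * k + 1) := by
  have hβ := one_le_of_succ_eq_add_one_div β h0.ge hrec
  intro k
  induction k with
  | zero => norm_num [h0, add_nonneg zero_le_one (sqrt_nonneg 3)]
  | succ n ih =>
    rw [hrec, show (2 * ((n + 1 : ℕ) : ℝ) + 1) = (2 * n + 1) + 2 by push_cast; ring]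
    exact add_one_div_le_of_le_add_sqrt (hβ n) (by linarith [n.cast_nonneg (α := ℝ)]) ih
end

section
/- Let f : ℝᵈ → ℝ and f₁,...,f_n : ℝᵈ → ℝ be convex, h₁,...,h_p : ℝᵈ → ℝ affine. Suppose (x*, μ*, θ*) with μ* ∈ ℝⁿ₊ is a saddle point of the Lagrangian L(x, μ, θ) = f(x) + ∑ μᵢ fᵢ(x) + ∑ θᵢ hᵢ(x), i.e. L(x*, μ, θ) ≤ L(x*, μ*, θ*) ≤ L(x, μ*, θ*) for all x ∈ ℝᵈ, μ ≥ 0, θ ∈ ℝᵖ. Define f̄(x) = max(f₁(x),...,f_n(x), |h₁(x)|,...,|h_p(x)|), λ* = ∑ μᵢ* + ∑ |θᵢ*|, and F(x, λ) = f(x) + λ f̄(x). Then F(x*, λ) ≤ F(x, λ*) for all x ∈ ℝᵈ and λ ≥ 0. -/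
open RealInnerProductSpace

/- The saddle point gives `f x* ≤ L(x*, μ*, θ*) ≤ L(x, μ*, θ*)` (the first inequality by
taking `μ = 0, θ = 0` on the left), and the penalty terms of `L(x, μ*, θ*)` are dominated by
`λ* f̄(x)` since `f̄` bounds every `fᵢ` and every `|hⱼ|`. On the other side, feasibility of
`x*` gives `f̄(x*) ≤ 0`, so `F(x*, λ) ≤ f x*` for every `λ ≥ 0`. -/

theorem sum_mul_add_sum_mul_le_mul {ι κ : Type*} [Fintype ι] [Fintype κ]
    (μ g : ι → ℝ) (θ k : κ → ℝ) (M : ℝ) (hμ : ∀ i, 0 ≤ μ i)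
    (hg : ∀ i, g i ≤ M) (hk : ∀ j, |k j| ≤ M) :
    ∑ i, μ i * g i + ∑ j, θ j * k j ≤ (∑ i, μ i + ∑ j, |θ j|) * M := by
  rw [add_mul, Finset.sum_mul, Finset.sum_mul]
  refine add_le_add (Finset.sum_le_sum fun i _ => ?_) (Finset.sum_le_sum fun j _ => ?_)
  · exact mul_le_mul_of_nonneg_left (hg i) (hμ i)
  · calc θ j * k j ≤ |θ j| * |k j| := (le_abs_self _).trans (abs_mul _ _).le
      _ ≤ |θ j| * M := mul_le_mul_of_nonneg_left (hk j) (abs_nonneg _)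

theorem stmt_8_general (d n p : ℕ) (hn : 0 < n)
    (f : EuclideanSpace ℝ (Fin d) → ℝ)
    (fi : Fin n → EuclideanSpace ℝ (Fin d) → ℝ)
    (h : Fin p → EuclideanSpace ℝ (Fin d) → ℝ)
    (L : EuclideanSpace ℝ (Fin d) → (Fin n → ℝ) → (Fin p → ℝ) → ℝ)
    (hL : ∀ x μ θ, L x μ θ = f x + ∑ i, μ i * fi i x + ∑ i, θ i * h i x)
    (xstar : EuclideanSpace ℝ (Fin d)) (μstar : Fin n → ℝ) (θstar : Fin p → ℝ)
    (hμstar : ∀ i, 0 ≤ μstar i)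
    (hfeas1 : ∀ i, fi i xstar ≤ 0) (hfeas2 : ∀ i, h i xstar = 0)
    (hsaddle : ∀ (x : EuclideanSpace ℝ (Fin d)) (μ : Fin n → ℝ) (θ : Fin p → ℝ),
      (∀ i, 0 ≤ μ i) →
        L xstar μ θ ≤ L xstar μstar θstar ∧ L xstar μstar θstar ≤ L x μstar θstar)
    (fbar : EuclideanSpace ℝ (Fin d) → ℝ)
    (hfbar : ∀ x, fbar x = Finset.univ.sup'
      (Finset.univ_nonempty_iff.mpr ⟨Sum.inl ⟨0, hn⟩⟩)
      (Sum.elim (fun i => fi i x) (fun j => |h j x|)))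
    (lamstar : ℝ) (hlamstar : lamstar = ∑ i, μstar i + ∑ i, |θstar i|)
    (F : EuclideanSpace ℝ (Fin d) → ℝ → ℝ)
    (hF : ∀ x lam, F x lam = f x + lam * fbar x) :
    ∀ (x : EuclideanSpace ℝ (Fin d)) (lam : ℝ), 0 ≤ lam →
      F xstar lam ≤ F x lamstar := by
  intro x lam hlam
  have hfbar_ge (y) (c : Fin n ⊕ Fin p) :
      Sum.elim (fun i => fi i y) (fun j => |h j y|) c ≤ fbar y :=
    hfbar y ▸ Finset.le_sup' _ (Finset.mem_univ c)
  have hfbar_star : fbar xstar ≤ 0 := by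
    rw [hfbar, Finset.sup'_le_iff]
    rintro (i | j) -
    · exact hfeas1 i
    · simp [hfeas2 j]
  have hf_star : f xstar ≤ L xstar μstar θstar := by
    simpa [hL] using (hsaddle xstar 0 0 fun _ => le_rfl).1
  calc F xstar lam ≤ f xstar := by
        rw [hF]; linarith [mul_nonpos_of_nonneg_of_nonpos hlam hfbar_star]
    _ ≤ L x μstar θstar := hf_star.trans (hsaddle x μstar θstar hμstar).2
    _ ≤ F x lamstar := by
        rw [hL, hF, hlamstar, add_assoc]
        gcongr
        exact sum_mul_add_sum_mul_le_mul _ _ _ _ _ hμstar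
          (fun i => hfbar_ge x (.inl i)) (fun j => hfbar_ge x (.inr j))

theorem stmt_8 (d n p : ℕ) (hn : 0 < n)
    (f : EuclideanSpace ℝ (Fin d) → ℝ)
    (fi : Fin n → EuclideanSpace ℝ (Fin d) → ℝ)
    (h : Fin p → EuclideanSpace ℝ (Fin d) → ℝ)
    (hf : ConvexOn ℝ Set.univ f)
    (hfi : ∀ i, ConvexOn ℝ Set.univ (fi i))
    (haff : ∀ i, ∃ (a : EuclideanSpace ℝ (Fin d)) (b : ℝ), ∀ x, h i x = ⟪a, x⟫ + b)
    (L : EuclideanSpace ℝ (Fin d) → (Fin n → ℝ) → (Fin p → ℝ) → ℝ)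
    (hL : ∀ x μ θ, L x μ θ = f x + ∑ i, μ i * fi i x + ∑ i, θ i * h i x)
    (xstar : EuclideanSpace ℝ (Fin d)) (μstar : Fin n → ℝ) (θstar : Fin p → ℝ)
    (hμstar : ∀ i, 0 ≤ μstar i)
    (hfeas1 : ∀ i, fi i xstar ≤ 0) (hfeas2 : ∀ i, h i xstar = 0)
    (hsaddle : ∀ (x : EuclideanSpace ℝ (Fin d)) (μ : Fin n → ℝ) (θ : Fin p → ℝ),
      (∀ i, 0 ≤ μ i) →
        L xstar μ θ ≤ L xstar μstar θstar ∧ L xstar μstar θstar ≤ L x μstar θstar)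
    (fbar : EuclideanSpace ℝ (Fin d) → ℝ)
    (hfbar : ∀ x, fbar x = Finset.univ.sup'
      (Finset.univ_nonempty_iff.mpr ⟨Sum.inl ⟨0, hn⟩⟩)
      (Sum.elim (fun i => fi i x) (fun j => |h j x|)))
    (lamstar : ℝ) (hlamstar : lamstar = ∑ i, μstar i + ∑ i, |θstar i|)
    (F : EuclideanSpace ℝ (Fin d) → ℝ → ℝ)
    (hF : ∀ x lam, F x lam = f x + lam * fbar x) :
    ∀ (x : EuclideanSpace ℝ (Fin d)) (lam : ℝ), 0 ≤ lam →
      F xstar lam ≤ F x lamstar :=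
  stmt_8_general d n p hn f fi h L hL xstar μstar θstar hμstar hfeas1 hfeas2 hsaddle fbar hfbar
    lamstar hlamstar F hF
end

section
/- Let (w_k) in ℝⁿ, (s_k) in ℝⁿ, (β_k) in ℝ be defined by: β₀ = 1, β_{k+1} = β_k + 1/β_k, s₀ = 0, s_{k+1} = s_k + v_k where each v_k is a unit vector (‖v_k‖ = 1), and w_{k+1} = w₀ - s_{k+1}/β_k. Define U_β^s(w) = -⟨s, w - w₀⟩ - (β/2)‖w - w₀‖². Then for any k̄ ≥ 1, ∑_{k=1}^{k̄} ⟨w_k - w₀, v_k⟩ ≤ -U_{β_{k̄}}^{s_{k̄+1}}(w_{k̄+1}) + β_{k̄}/2. -/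
/-!
Write `b = β k`, `σ = s (k + 1)`. Since `w (k + 1) - w 0 = -b⁻¹ • σ`, the value
`U σ b (w (k + 1))` is `‖σ‖² / (2b)`, and the claim follows from the invariant
`∑_{j ≤ k} ⟪w j - w 0, v j⟫ ≤ b / 2 - ‖σ‖² / (2b)`, proved by induction from
`k = 0`, where both sides vanish.
Adding the next term `-b⁻¹ ⟪σ, v⟫` and expanding `‖σ + v‖² = ‖σ‖² + 2⟪σ, v⟫ + 1`, the
right-hand side becomes exactly `(b + 1/b) / 2 - ‖σ + v‖² / (2b)`; replacing the
denominator `2b` by the larger `2(b + 1/b)` only increases it.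
-/

open RealInnerProductSpace

lemma pos_of_add_one_div_rec {β : ℕ → ℝ} (h0 : 0 < β 0)
    (hrec : ∀ k, β (k + 1) = β k + 1 / β k) (k : ℕ) : 0 < β k := by
  induction k with
  | zero => exact h0
  | succ k ih => rw [hrec]; positivity

section InnerProductSpace

variable {E : Type*} [NormedAddCommGroup E] [InnerProductSpace ℝ E]

lemma neg_inner_neg_inv_smul_sub_mul_norm_sq {b : ℝ} (hb : b ≠ 0) (σ : E) :
    -⟪σ, -(b⁻¹ • σ)⟫ - b / 2 * ‖-(b⁻¹ • σ)‖ ^ 2 = ‖σ‖ ^ 2 / (2 * b) := by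
  rw [inner_neg_right, real_inner_smul_right, real_inner_self_eq_norm_sq, norm_neg, norm_smul,
    norm_inv, Real.norm_eq_abs, mul_pow, inv_pow, sq_abs]
  field_simp
  ring

lemma half_sub_norm_sq_div_sub_inner_le_add_one_div {b : ℝ} (hb : 0 < b) (σ : E) {v : E}
    (hv : ‖v‖ = 1) :
    b / 2 - ‖σ‖ ^ 2 / (2 * b) - b⁻¹ * ⟪σ, v⟫ ≤
      (b + 1 / b) / 2 - ‖σ + v‖ ^ 2 / (2 * (b + 1 / b)) := by
  have hexpand : b / 2 - ‖σ‖ ^ 2 / (2 * b) - b⁻¹ * ⟪σ, v⟫ =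
      (b + 1 / b) / 2 - ‖σ + v‖ ^ 2 / (2 * b) := by
    rw [norm_add_sq_real, hv]
    field_simp
    ring
  have hb_le : 2 * b ≤ 2 * (b + 1 / b) := by
    have : 0 < 1 / b := by positivity
    linarith
  have hdenom : ‖σ + v‖ ^ 2 / (2 * (b + 1 / b)) ≤ ‖σ + v‖ ^ 2 / (2 * b) :=
    div_le_div_of_nonneg_left (by positivity) (by positivity) hb_le
  linarith

end InnerProductSpace

theorem stmt_11 (n : ℕ)
    (β : ℕ → ℝ) (hβ0 : β 0 = 1) (hβrec : ∀ k, β (k + 1) = β k + 1 / β k)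
    (v s w : ℕ → EuclideanSpace ℝ (Fin n))
    (hv : ∀ k, ‖v k‖ = 1)
    (hs0 : s 0 = 0) (hsrec : ∀ k, s (k + 1) = s k + v k)
    (hwrec : ∀ k, w (k + 1) = w 0 - (β k)⁻¹ • s (k + 1))
    (U : EuclideanSpace ℝ (Fin n) → ℝ → EuclideanSpace ℝ (Fin n) → ℝ)
    (hU : ∀ σ b ω, U σ b ω = -⟪σ, ω - w 0⟫ - b / 2 * ‖ω - w 0‖ ^ 2) :
    ∀ kbar : ℕ, 1 ≤ kbar →
      ∑ k ∈ Finset.Icc 1 kbar, ⟪w k - w 0, v k⟫ ≤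
        -(U (s (kbar + 1)) (β kbar) (w (kbar + 1))) + β kbar / 2 := by
  have hβpos := pos_of_add_one_div_rec (by rw [hβ0]; exact one_pos) hβrec
  have hw (k : ℕ) : w (k + 1) - w 0 = -((β k)⁻¹ • s (k + 1)) := by
    rw [hwrec k]; abel
  have hsum (K : ℕ) :
      ∑ k ∈ Finset.Icc 1 K, ⟪w k - w 0, v k⟫ ≤ β K / 2 - ‖s (K + 1)‖ ^ 2 / (2 * β K) := by
    induction K with
    | zero => simp [hβ0, hsrec, hs0, hv]
    | succ K ih =>
      rw [Finset.sum_Icc_succ_top (by omega), hw, inner_neg_left, real_inner_smul_left,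
        hsrec (K + 1), hβrec]
      linarith [half_sub_norm_sq_div_sub_inner_le_add_one_div (hβpos K) (s (K + 1)) (hv (K + 1))]
  intro kbar _
  rw [hU, hw, neg_inner_neg_inv_smul_sub_mul_norm_sq (hβpos kbar).ne']
  linarith [hsum kbar]
end

section
/- With the setup of the weighted dual averages recursion (β₀ = 1, β_{k+1} = β_k + 1/β_k, s₀ = 0, s_{k+1} = s_k + v_k with ‖v_k‖ = 1, w_{k+1} = w₀ - s_{k+1}/β_k), suppose w* ∈ ℝⁿ satisfies ⟨v_k, w_k - w*⟩ ≥ 0 for all k ≥ 0. Then for every k̄ ≥ 1, ‖w_{k̄} - w*‖ ≤ ‖w₀ - w*‖ + 1. -/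
/-!
Put `g := w₀ - w*` and `uₖ := βₖ g - sₖ₊₁`, so that `wₖ₊₁ - w* = uₖ / βₖ`; it suffices to show
`‖uₖ‖ ≤ βₖ (‖g‖ + 1)`. Since `uₖ₊₁ = (uₖ - vₖ₊₁) + g / βₖ` and the hypothesis at `k + 1` says
`⟨vₖ₊₁, uₖ⟩ ≥ 0`, we get `‖uₖ - vₖ₊₁‖² ≤ ‖uₖ‖² + 1 ≤ (βₖ (‖g‖ + 1) + 1 / βₖ)²`, and adding `‖g‖ / βₖ`
gives exactly `βₖ₊₁ (‖g‖ + 1)`.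
-/

open RealInnerProductSpace

section
variable {E : Type*} [NormedAddCommGroup E] [InnerProductSpace ℝ E]

theorem norm_sub_le_add_of_inner_nonneg {u v : E} {a b : ℝ} (hvu : 0 ≤ ⟪v, u⟫) (hv : ‖v‖ = 1)
    (hu : ‖u‖ ≤ a) (hab : 1 ≤ 2 * a * b) : ‖u - v‖ ≤ a + b := by
  have ha : 0 ≤ a := (norm_nonneg u).trans hu
  have hb : 0 < b := by nlinarith
  have hsq : ‖u - v‖ ^ 2 ≤ (a + b) ^ 2 :=
    calc ‖u - v‖ ^ 2 = ‖u‖ ^ 2 - 2 * ⟪v, u⟫ + ‖v‖ ^ 2 := by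
          rw [norm_sub_sq_real, real_inner_comm]
      _ ≤ a ^ 2 + 1 := by rw [hv]; nlinarith [norm_nonneg u]
      _ ≤ (a + b) ^ 2 := by nlinarith
  exact le_of_pow_le_pow_left₀ two_ne_zero (by positivity) hsq

theorem one_le_of_add_inv_rec {β : ℕ → ℝ} (hβ0 : β 0 = 1)
    (hβrec : ∀ k, β (k + 1) = β k + 1 / β k) (k : ℕ) : 1 ≤ β k := by
  induction k with
  | zero => exact hβ0.ge
  | succ k ih =>
    have : 0 ≤ 1 / β k := by positivity
    linarith [hβrec k]

theorem norm_smul_sub_partialSum_le {β : ℕ → ℝ} (hβ0 : β 0 = 1)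
    (hβrec : ∀ k, β (k + 1) = β k + 1 / β k) {v s : ℕ → E} (hv : ∀ k, ‖v k‖ = 1)
    (hs0 : s 0 = 0) (hsrec : ∀ k, s (k + 1) = s k + v k) (g : E)
    (hangle : ∀ k, 0 ≤ ⟪v (k + 1), β k • g - s (k + 1)⟫) (k : ℕ) :
    ‖β k • g - s (k + 1)‖ ≤ β k * (‖g‖ + 1) := by
  induction k with
  | zero =>
    rw [hβ0, one_smul, one_mul, hsrec, hs0, zero_add, ← hv 0]
    exact norm_sub_le g (v 0)
  | succ k ih =>
    have hβ : 0 < β k := one_pos.trans_le (one_le_of_add_inv_rec hβ0 hβrec k)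
    have hsplit : β (k + 1) • g - s (k + 1 + 1) =
        (β k • g - s (k + 1) - v (k + 1)) + (β k)⁻¹ • g := by
      rw [hβrec k, hsrec (k + 1), one_div]
      module
    have hstep : ‖β k • g - s (k + 1) - v (k + 1)‖ ≤ β k * (‖g‖ + 1) + (β k)⁻¹ := by
      refine norm_sub_le_add_of_inner_nonneg (hangle k) (hv _) ih ?_
      have : 2 * (β k * (‖g‖ + 1)) * (β k)⁻¹ = 2 * (‖g‖ + 1) := by field_simp
      linarith [norm_nonneg g]
    calc ‖β (k + 1) • g - s (k + 1 + 1)‖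
        ≤ ‖β k • g - s (k + 1) - v (k + 1)‖ + (β k)⁻¹ * ‖g‖ := by
          rw [hsplit]
          refine (norm_add_le _ _).trans_eq ?_
          rw [norm_smul, Real.norm_of_nonneg (inv_nonneg.2 hβ.le)]
      _ ≤ β k * (‖g‖ + 1) + (β k)⁻¹ + (β k)⁻¹ * ‖g‖ := by gcongr
      _ = β (k + 1) * (‖g‖ + 1) := by rw [hβrec k, one_div]; ring

end

theorem stmt_12 (n : ℕ)
    (β : ℕ → ℝ) (hβ0 : β 0 = 1) (hβrec : ∀ k, β (k + 1) = β k + 1 / β k)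
    (v s w : ℕ → EuclideanSpace ℝ (Fin n))
    (hv : ∀ k, ‖v k‖ = 1)
    (hs0 : s 0 = 0) (hsrec : ∀ k, s (k + 1) = s k + v k)
    (hwrec : ∀ k, w (k + 1) = w 0 - (β k)⁻¹ • s (k + 1))
    (wstar : EuclideanSpace ℝ (Fin n))
    (hmono : ∀ k, 0 ≤ ⟪v k, w k - wstar⟫) :
    ∀ kbar : ℕ, 1 ≤ kbar → ‖w kbar - wstar‖ ≤ ‖w 0 - wstar‖ + 1 := by
  have hβ : ∀ k, 0 < β k := fun k => one_pos.trans_le (one_le_of_add_inv_rec hβ0 hβrec k)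
  have hu : ∀ k, β k • (w (k + 1) - wstar) = β k • (w 0 - wstar) - s (k + 1) := fun k => by
    rw [hwrec, smul_sub, smul_sub, smul_sub, smul_inv_smul₀ (hβ k).ne']
    abel
  have hangle : ∀ k, 0 ≤ ⟪v (k + 1), β k • (w 0 - wstar) - s (k + 1)⟫ := fun k => by
    rw [← hu, real_inner_smul_right]
    exact mul_nonneg (hβ k).le (hmono _)
  intro kbar hk
  obtain ⟨k, rfl⟩ := Nat.exists_eq_add_of_le' hk
  have hbound := norm_smul_sub_partialSum_le hβ0 hβrec hv hs0 hsrec _ hangle k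
  rw [← hu, norm_smul, Real.norm_of_nonneg (hβ k).le] at hbound
  exact le_of_mul_le_mul_left hbound (hβ k)
end

section
/- With the setup of the weighted dual averages recursion and the assumption ⟨v_k, w_k - w*⟩ ≥ 0 for all k, if additionally w₀ ≠ w*, then the bound is strict: ‖w_{k̄} - w*‖ < ‖w₀ - w*‖ + 1 for all k̄ ≥ 1. -/
/-!
With `a = w₀ - w*`, one has `w_{k+1} - w* = a - s_{k+1} / β_k`, and the invariant
`‖w_{k+1} - w*‖² ≤ ‖a‖² + 1` propagates along the recursion: the monotonicity condition
`⟨v_{k+1}, w_{k+1} - w*⟩ ≥ 0` absorbs the cross term created by the new direction, and the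
invariant at step `k` (used once as it stands and once scaled by `β_k²`) absorbs the rest.
Since `a ≠ 0`, `‖a‖² + 1 < (‖a‖ + 1)²`, which makes the bound strict.
-/

open RealInnerProductSpace

section InnerProductSpace

variable {E : Type*} [NormedAddCommGroup E] [InnerProductSpace ℝ E]

theorem norm_sub_smul_sq (a u : E) (t : ℝ) :
    ‖a - t • u‖ ^ 2 = ‖a‖ ^ 2 - 2 * t * ⟪a, u⟫ + t ^ 2 * ‖u‖ ^ 2 := by
  rw [norm_sub_sq_real, inner_smul_right, norm_smul, mul_pow, Real.norm_eq_abs, sq_abs]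
  ring

theorem norm_sub_inv_smul_add_sq_le {a s v : E} {b : ℝ} (hb : 0 < b) (hv : ‖v‖ = 1)
    (hvs : 0 ≤ ⟪v, a - b⁻¹ • s⟫) (hs : ‖a - b⁻¹ • s‖ ^ 2 ≤ ‖a‖ ^ 2 + 1) :
    ‖a - (b + b⁻¹)⁻¹ • (s + v)‖ ^ 2 ≤ ‖a‖ ^ 2 + 1 := by
  set c := b⁻¹
  have hbc : b * c = 1 := mul_inv_cancel₀ hb.ne'
  have hbc_pos : 0 < b + c := by positivity
  clear_value c
  rw [norm_sub_smul_sq] at hs ⊢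
  rw [inner_sub_right, inner_smul_right, real_inner_comm a v, real_inner_comm s v] at hvs
  have hsv : ‖s + v‖ ^ 2 = ‖s‖ ^ 2 + 2 * ⟪s, v⟫ + 1 := by
    rw [norm_add_sq_real, hv, one_pow]
  have hs' : ‖s‖ ^ 2 - 2 * b * ⟪a, s⟫ ≤ b ^ 2 := by
    have := mul_le_mul_of_nonneg_left hs (sq_nonneg b)
    linear_combination this - (b * c * ‖s‖ ^ 2 + ‖s‖ ^ 2 - 2 * b * ⟪a, s⟫) * hbc
  have hvs' : 2 * ⟪s, v⟫ + 2 * c ^ 2 * ⟪s, v⟫ ≤ 2 * (b + c) * ⟪a, v⟫ := by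
    have := mul_le_mul_of_nonneg_left hvs hbc_pos.le
    linear_combination 2 * this - 2 * ⟪s, v⟫ * hbc
  have hsv_nonneg : 0 ≤ c ^ 2 * ‖s + v‖ ^ 2 := by positivity
  have key : ‖s + v‖ ^ 2 - 2 * (b + c) * ⟪a, s + v⟫ ≤ (b + c) ^ 2 := by
    rw [hsv, inner_add_right]
    rw [hsv] at hsv_nonneg
    linear_combination hs + hs' + hvs' + hsv_nonneg - 2 * hbc
  have := mul_le_mul_of_nonneg_left key (sq_nonneg (b + c)⁻¹)
  field_simp at this ⊢
  linarith

theorem pos_of_succ_eq_add_one_div {β : ℕ → ℝ} (hβ0 : 0 < β 0)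
    (hβrec : ∀ k, β (k + 1) = β k + 1 / β k) (k : ℕ) : 0 < β k := by
  induction k with
  | zero => exact hβ0
  | succ k ih => rw [hβrec]; positivity

theorem norm_succ_sub_sq_le {β : ℕ → ℝ} (hβ0 : β 0 = 1)
    (hβrec : ∀ k, β (k + 1) = β k + 1 / β k) {v s w : ℕ → E} (hv : ∀ k, ‖v k‖ = 1)
    (hs0 : s 0 = 0) (hsrec : ∀ k, s (k + 1) = s k + v k)
    (hwrec : ∀ k, w (k + 1) = w 0 - (β k)⁻¹ • s (k + 1)) {wstar : E}
    (hmono : ∀ k, 0 ≤ ⟪v k, w k - wstar⟫) (k : ℕ) :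
    ‖w (k + 1) - wstar‖ ^ 2 ≤ ‖w 0 - wstar‖ ^ 2 + 1 := by
  have hβ := pos_of_succ_eq_add_one_div (by rw [hβ0]; exact one_pos) hβrec
  have hw : ∀ k, w (k + 1) - wstar = (w 0 - wstar) - (β k)⁻¹ • s (k + 1) := fun k => by
    rw [hwrec, sub_right_comm]
  induction k with
  | zero =>
    have h0 := hmono 0
    rw [hw, hsrec, hs0, zero_add, hβ0, inv_one, one_smul, norm_sub_sq_real, hv, real_inner_comm]
    linarith
  | succ k ih =>
    have hvs := hmono (k + 1)
    rw [hw] at ih hvs ⊢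
    rw [hsrec (k + 1), hβrec, one_div]
    exact norm_sub_inv_smul_add_sq_le (hβ k) (hv _) hvs ih

end InnerProductSpace

theorem stmt_13 (n : ℕ)
    (β : ℕ → ℝ) (hβ0 : β 0 = 1) (hβrec : ∀ k, β (k + 1) = β k + 1 / β k)
    (v s w : ℕ → EuclideanSpace ℝ (Fin n))
    (hv : ∀ k, ‖v k‖ = 1)
    (hs0 : s 0 = 0) (hsrec : ∀ k, s (k + 1) = s k + v k)
    (hwrec : ∀ k, w (k + 1) = w 0 - (β k)⁻¹ • s (k + 1))
    (wstar : EuclideanSpace ℝ (Fin n))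
    (hmono : ∀ k, 0 ≤ ⟪v k, w k - wstar⟫)
    (hne : w 0 ≠ wstar) :
    ∀ kbar : ℕ, 1 ≤ kbar → ‖w kbar - wstar‖ < ‖w 0 - wstar‖ + 1 := by
  intro kbar hk
  obtain ⟨k, rfl⟩ := Nat.exists_eq_add_of_le' hk
  have hsq := norm_succ_sub_sq_le hβ0 hβrec hv hs0 hsrec hwrec hmono k
  have ha : 0 < ‖w 0 - wstar‖ := norm_pos_iff.2 (sub_ne_zero.2 hne)
  exact lt_of_pow_lt_pow_left₀ 2 (by positivity) (by nlinarith)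
end

section
/- Iteration complexity: let C₁, C₂ > 0, ε₁, ε₂ > 0, and α = (1/2)(1/(√8(1+√3)) + 1)². If K ≥ α · max(C₁/ε₁, C₂/ε₂)² and K ≥ 1, then for i = 1, 2: (C_i / (2(K+1))) · (1/(1+√3) + √(2K+1)) ≤ ε_i. -/
/-! Put `d = 1/(1+√3)` and `κ = d/2 + √2`; then `α = (κ/2)²`, so the hypothesis says
`κ · (C/ε) ≤ 2√K`. The claim then follows from the two elementary bounds
`2√K ≤ K + 1` and `√K · √(2K+1) ≤ √2 · (K + 1)`, which together give
`√K · (d + √(2K+1)) ≤ (K + 1) · κ`. -/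

open Real

lemma two_mul_sqrt_le_add_one {x : ℝ} (hx : 0 ≤ x) : 2 * √x ≤ x + 1 := by
  nlinarith [sq_nonneg (√x - 1), sq_sqrt hx]

lemma sqrt_mul_sqrt_two_mul_add_one_le {x : ℝ} (hx : 0 ≤ x) :
    √x * √(2 * x + 1) ≤ √2 * (x + 1) := by
  rw [← sqrt_mul hx, ← sqrt_sq (by linarith : 0 ≤ x + 1), ← sqrt_mul zero_le_two]
  exact sqrt_le_sqrt (by nlinarith)

lemma sqrt_mul_add_sqrt_two_mul_add_one_le {d x : ℝ} (hd : 0 ≤ d) (hx : 0 ≤ x) :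
    √x * (d + √(2 * x + 1)) ≤ (x + 1) * (d / 2 + √2) := by
  nlinarith [mul_le_mul_of_nonneg_left (two_mul_sqrt_le_add_one hx) hd,
    sqrt_mul_sqrt_two_mul_add_one_le hx]

lemma mul_add_sqrt_two_mul_add_one_le {d x r : ℝ} (hd : 0 ≤ d) (hx : 0 ≤ x)
    (h : ((d / 2 + √2) * r / 2) ^ 2 ≤ x) :
    r * (d + √(2 * x + 1)) ≤ 2 * (x + 1) := by
  have hκ : 0 < d / 2 + √2 := by positivity
  have hr' : (d / 2 + √2) * r / 2 ≤ √x := le_sqrt_of_sq_le h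
  have key : (d / 2 + √2) * (r * (d + √(2 * x + 1))) ≤ (d / 2 + √2) * (2 * (x + 1)) := by
    calc (d / 2 + √2) * (r * (d + √(2 * x + 1)))
        = 2 * ((d / 2 + √2) * r / 2 * (d + √(2 * x + 1))) := by ring
      _ ≤ 2 * (√x * (d + √(2 * x + 1))) := by gcongr
      _ ≤ 2 * ((x + 1) * (d / 2 + √2)) :=
          mul_le_mul_of_nonneg_left (sqrt_mul_add_sqrt_two_mul_add_one_le hd hx) zero_le_two
      _ = (d / 2 + √2) * (2 * (x + 1)) := by ring
  exact le_of_mul_le_mul_left key hκ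

lemma alpha_eq :
    1 / 2 * (1 / (√8 * (1 + √3)) + 1) ^ 2 = ((1 / (1 + √3) / 2 + √2) / 2) ^ 2 := by
  have h8 : √8 = 2 * √2 := by
    rw [show (8 : ℝ) = 2 ^ 2 * 2 by norm_num, sqrt_mul (by positivity), sqrt_sq zero_le_two]
  have h2 : √2 ^ 2 = 2 := sq_sqrt zero_le_two
  rw [h8]
  field_simp
  ring_nf
  rw [h2]

lemma div_mul_add_sqrt_le_of_alpha_mul_sq_le {x C ε : ℝ} (hx : 0 ≤ x) (hε : 0 < ε)
    (h : 1 / 2 * (1 / (√8 * (1 + √3)) + 1) ^ 2 * (C / ε) ^ 2 ≤ x) :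
    C / (2 * (x + 1)) * (1 / (1 + √3) + √(2 * x + 1)) ≤ ε := by
  rw [alpha_eq, ← mul_pow, ← mul_div_right_comm] at h
  have key := mul_add_sqrt_two_mul_add_one_le (by positivity) hx h
  rw [div_mul_eq_mul_div, div_le_iff₀ (by positivity)]
  calc C * (1 / (1 + √3) + √(2 * x + 1))
      = ε * (C / ε * (1 / (1 + √3) + √(2 * x + 1))) := by field_simp
    _ ≤ ε * (2 * (x + 1)) := by gcongr

theorem stmt_19_general (K : ℕ) (C₁ C₂ ε₁ ε₂ α : ℝ)
    (hC₁ : 0 < C₁) (hC₂ : 0 < C₂) (hε₁ : 0 < ε₁) (hε₂ : 0 < ε₂)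
    (hα : α = 1 / 2 * (1 / (Real.sqrt 8 * (1 + Real.sqrt 3)) + 1) ^ 2)
    (hK : α * max (C₁ / ε₁) (C₂ / ε₂) ^ 2 ≤ (K : ℝ)) :
    C₁ / (2 * (K + 1)) * (1 / (1 + Real.sqrt 3) + Real.sqrt (2 * K + 1)) ≤ ε₁ ∧
    C₂ / (2 * (K + 1)) * (1 / (1 + Real.sqrt 3) + Real.sqrt (2 * K + 1)) ≤ ε₂ := by
  subst hα
  have side {C ε : ℝ} (hC : 0 < C) (hε : 0 < ε) (hle : C / ε ≤ max (C₁ / ε₁) (C₂ / ε₂)) :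
      C / (2 * (K + 1)) * (1 / (1 + √3) + √(2 * K + 1)) ≤ ε := by
    refine div_mul_add_sqrt_le_of_alpha_mul_sq_le K.cast_nonneg hε (le_trans ?_ hK)
    gcongr
  exact ⟨side hC₁ hε₁ (le_max_left _ _), side hC₂ hε₂ (le_max_right _ _)⟩

theorem stmt_19 (K : ℕ) (hK1 : 1 ≤ K) (C₁ C₂ ε₁ ε₂ α : ℝ)
    (hC₁ : 0 < C₁) (hC₂ : 0 < C₂) (hε₁ : 0 < ε₁) (hε₂ : 0 < ε₂)
    (hα : α = 1 / 2 * (1 / (Real.sqrt 8 * (1 + Real.sqrt 3)) + 1) ^ 2)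
    (hK : α * max (C₁ / ε₁) (C₂ / ε₂) ^ 2 ≤ (K : ℝ)) :
    C₁ / (2 * (K + 1)) * (1 / (1 + Real.sqrt 3) + Real.sqrt (2 * K + 1)) ≤ ε₁ ∧
    C₂ / (2 * (K + 1)) * (1 / (1 + Real.sqrt 3) + Real.sqrt (2 * K + 1)) ≤ ε₂ :=
  stmt_19_general K C₁ C₂ ε₁ ε₂ α hC₁ hC₂ hε₁ hε₂ hα hK
end
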